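/- A vector x ∈ J is an extreme point of the closed unit ball B_J if and only if ‖x‖_J = ‖x‖₂ = 1. -/

import Mathlib

open Filter Topology Classical

noncomputable section

/-- Admissible finite families of pairwise disjoint, increasingly ordered intervals
`[f i .1, f i .2]` of `ℕ`. -/
def Admissible (n : ℕ) (f : Fin n → ℕ × ℕ) : Prop :=
  (∀ i, (f i).1 ≤ (f i).2) ∧ ∀ i j : Fin n, i < j → (f i).2 < (f j).1

/-- The set of estimates appearing in the definition of the James norm. -/
def estimates (x : ℕ → ℝ) : Set ℝ :=
  {r | ∃ n, ∃ f : Fin n → ℕ × ℕ, Admissible n f ∧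
    r = Real.sqrt (∑ i, (∑ k ∈ Finset.Icc (f i).1 (f i).2, x k) ^ 2)}

/-- `x` belongs to the James space `J`. -/
def MemJ (x : ℕ → ℝ) : Prop := BddAbove (estimates x)

/-- The James norm. -/
def jamesNorm (x : ℕ → ℝ) : ℝ := sSup (estimates x)

/-- The ℓ² norm. -/
def l2Norm (x : ℕ → ℝ) : ℝ := Real.sqrt (∑' k, (x k) ^ 2)

/-- The closed unit ball of the James space. -/
def ballJ : Set (ℕ → ℝ) := {x | MemJ x ∧ jamesNorm x ≤ 1}

/-- The support of a sequence. -/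
def supp (x : ℕ → ℝ) : Set ℕ := {n | x n ≠ 0}

/-- The (possibly infinite) sum of `x` over a subset `I` of `ℕ`,
as the limit of the partial sums. -/
def setSum (x : ℕ → ℝ) (I : Set ℕ) : ℝ :=
  limUnder atTop (fun N => ∑ k ∈ Finset.range N, if k ∈ I then x k else 0)

/-- An `x`-norming family: a (finite or infinite) family of pairwise disjoint
nonempty intervals of `ℕ`, indexed by an initial segment `F` of `ℕ`, ordered
increasingly, whose interval sums exist and realize the James norm of `x`. -/
structure NormingFamily (x : ℕ → ℝ) where
  F : Set ℕ
  F_nonempty : F.Nonempty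
  initial : ∀ ⦃m n : ℕ⦄, m ≤ n → n ∈ F → m ∈ F
  I : ℕ → Set ℕ
  I_nonempty : ∀ i ∈ F, (I i).Nonempty
  I_interval : ∀ i ∈ F, (I i).OrdConnected
  ordered : ∀ i ∈ F, ∀ j ∈ F, i < j → ∀ a ∈ I i, ∀ b ∈ I j, a < b
  sums_exist : ∀ i ∈ F, ∃ l : ℝ,
    Tendsto (fun N => ∑ k ∈ Finset.range N, if k ∈ I i then x k else 0) atTop (𝓝 l)
  norming : ∑' i : F, (setSum x (I i)) ^ 2 = (jamesNorm x) ^ 2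

/-- An `x`-norming partition: an `x`-norming family whose intervals cover the
support of `x`, every interval has its minimum in the support, every non-final
interval has its maximum in the support, and the final interval does not extend
beyond the supremum of the support. -/
structure NormingPartition (x : ℕ → ℝ) extends NormingFamily x where
  covers : supp x ⊆ ⋃ i ∈ F, I i
  min_in_supp : ∀ i ∈ F, ∃ m ∈ I i ∩ supp x, ∀ k ∈ I i, m ≤ k
  max_in_supp : ∀ i ∈ F, (∃ j ∈ F, i < j) → ∃ m ∈ I i ∩ supp x, ∀ k ∈ I i, k ≤ m
  bounded_by_supp : ∀ i ∈ F, ∀ k ∈ I i, ∃ m ∈ supp x, k ≤ m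

/-- `n₁ < n₂` are consecutive elements of the support of `x`. -/
def Consecutive (x : ℕ → ℝ) (n₁ n₂ : ℕ) : Prop :=
  n₁ ∈ supp x ∧ n₂ ∈ supp x ∧ n₁ < n₂ ∧ ∀ k, n₁ < k → k < n₂ → x k = 0

end

/-!
If `‖x‖_J = ‖x‖₂ = 1`, then `x` is extreme: singleton intervals give `‖·‖₂ ≤ ‖·‖_J`, so `B_J`
lies in the ℓ² unit ball, whose unit vectors are extreme by strict convexity.

Conversely let `x` be extreme. Perturbing along `e₀` shows `‖x‖_J = 1`. Write estimates as
chains of cut points `g 0 ≤ ⋯ ≤ g m`, valued by the squared sums of `x` over the blocks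
`[g i, g (i + 1))`, and let `L c` and `R c` be the suprema over chains ending at or before,
resp. starting at or after, `c`. If `L (c + 1) + R (c + 1) < ‖x‖_J²`, every estimate that sees
the perturbation `e c - e (c + 1)` is small, so `x ± t (e c - e (c + 1))` stays in `B_J`. Hence
chains can be cut anywhere without loss, and comparing near-optimal chains for `L (n + 1)` and
`R n` with the chain merging their blocks around `n` gives `L (n + 1) ≤ L n + x n ²`. Thus
`‖x‖_J² ≤ sup_N L N ≤ ‖x‖₂² ≤ ‖x‖_J²`.
-/

open Finset

noncomputable section

def partialSum (x : ℕ → ℝ) (n : ℕ) : ℝ := ∑ k ∈ range n, x k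

lemma partialSum_succ (x : ℕ → ℝ) (n : ℕ) : partialSum x (n + 1) = partialSum x n + x n :=
  sum_range_succ _ _

lemma sum_Icc_eq_partialSum_sub (x : ℕ → ℝ) {a b : ℕ} (h : a ≤ b + 1) :
    ∑ k ∈ Icc a b, x k = partialSum x (b + 1) - partialSum x a := by
  rw [← Ico_add_one_right_eq_Icc, sum_Ico_eq_sub _ h, partialSum, partialSum]

def estimateSq (x : ℕ → ℝ) (n : ℕ) (f : Fin n → ℕ × ℕ) : ℝ :=
  ∑ i, (∑ k ∈ Icc (f i).1 (f i).2, x k) ^ 2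

lemma estimateSq_nonneg (x : ℕ → ℝ) (n : ℕ) (f : Fin n → ℕ × ℕ) : 0 ≤ estimateSq x n f :=
  sum_nonneg fun _ _ => sq_nonneg _

lemma admissible_elim0 : Admissible 0 Fin.elim0 := ⟨fun i => i.elim0, fun i => i.elim0⟩

namespace Admissible

variable {n : ℕ} {f : Fin n → ℕ × ℕ}

lemma comp_orderEmbedding (hf : Admissible n f) {k : ℕ} (e : Fin k ↪o Fin n) :
    Admissible k (f ∘ e) :=
  ⟨fun _ => hf.1 _, fun _ _ hij => hf.2 _ _ (e.lt_iff_lt.mpr hij)⟩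

lemma snoc (hf : Admissible n f) {p : ℕ × ℕ} (hp : p.1 ≤ p.2) (hlt : ∀ i, (f i).2 < p.1) :
    Admissible (n + 1) (Fin.snoc f p) := by
  refine ⟨Fin.lastCases (by simpa using hp) fun i => by simpa using hf.1 i, fun i j hij => ?_⟩
  induction j using Fin.lastCases with
  | last =>
    obtain ⟨i, rfl⟩ := Fin.exists_castSucc_eq.mpr (Fin.ne_last_of_lt hij)
    simpa using hlt i
  | cast j =>
    obtain ⟨i, rfl⟩ :=
      Fin.exists_castSucc_eq.mpr (Fin.ne_last_of_lt (hij.trans (Fin.castSucc_lt_last j)))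
    simpa using hf.2 i j (Fin.castSucc_lt_castSucc_iff.mp hij)

lemma eq_of_mem_Icc (hf : Admissible n f) {i j : Fin n} {k : ℕ}
    (hi : k ∈ Icc (f i).1 (f i).2) (hj : k ∈ Icc (f j).1 (f j).2) : i = j := by
  rw [mem_Icc] at hi hj
  rcases lt_trichotomy i j with h | h | h
  · exact absurd (hf.2 i j h) (by omega)
  · exact h
  · exact absurd (hf.2 j i h) (by omega)

lemma card_filter_fst_eq_le_one (hf : Admissible n f) (a : ℕ) :
    #{i | (f i).1 = a} ≤ 1 :=
  card_le_one.mpr fun i hi j hj => by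
    simp only [mem_filter, mem_univ, true_and] at hi hj
    exact hf.eq_of_mem_Icc (k := a) (mem_Icc.mpr ⟨hi.le, hi ▸ hf.1 i⟩)
      (mem_Icc.mpr ⟨hj.le, hj ▸ hf.1 j⟩)

lemma card_filter_snd_eq_le_one (hf : Admissible n f) (a : ℕ) :
    #{i | (f i).2 = a} ≤ 1 :=
  card_le_one.mpr fun i hi j hj => by
    simp only [mem_filter, mem_univ, true_and] at hi hj
    exact hf.eq_of_mem_Icc (k := a) (mem_Icc.mpr ⟨hi ▸ hf.1 i, hi.ge⟩)
      (mem_Icc.mpr ⟨hj ▸ hf.1 j, hj.ge⟩)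

lemma snd_lt_or_le_fst (hf : Admissible n f) {c : ℕ}
    {i : Fin n} (hi : (f i).2 = c ∨ (f i).1 = c + 1) (j : Fin n) :
    (f j).2 < c + 1 ∨ c + 1 ≤ (f j).1 := by
  by_contra! hj
  have hfi := hf.1 i
  rcases hi with hi | hi
  · have := hf.eq_of_mem_Icc (i := i) (j := j) (k := c) (mem_Icc.mpr ⟨by omega, hi.ge⟩)
      (mem_Icc.mpr ⟨by omega, by omega⟩)
    subst this; omega
  · have := hf.eq_of_mem_Icc (i := i) (j := j) (k := c + 1) (mem_Icc.mpr ⟨hi.le, by omega⟩)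
      (mem_Icc.mpr ⟨by omega, by omega⟩)
    subst this; omega

end Admissible

section JamesNorm

variable {x : ℕ → ℝ}

lemma zero_mem_estimates (x : ℕ → ℝ) : 0 ∈ estimates x :=
  ⟨0, Fin.elim0, admissible_elim0, by simp⟩

lemma jamesNorm_nonneg (hx : MemJ x) : 0 ≤ jamesNorm x :=
  le_csSup hx (zero_mem_estimates x)

lemma estimateSq_le_jamesNorm_sq (hx : MemJ x) {n : ℕ} {f : Fin n → ℕ × ℕ}
    (hf : Admissible n f) : estimateSq x n f ≤ jamesNorm x ^ 2 := by
  have h : √(estimateSq x n f) ≤ jamesNorm x := le_csSup hx ⟨n, f, hf, rfl⟩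
  simpa [Real.sq_sqrt (estimateSq_nonneg x n f)] using pow_le_pow_left₀ (Real.sqrt_nonneg _) h 2

lemma abs_sum_Icc_le_jamesNorm (hx : MemJ x) (a b : ℕ) :
    |∑ k ∈ Icc a b, x k| ≤ jamesNorm x := by
  by_cases hab : a ≤ b
  · have h := estimateSq_le_jamesNorm_sq hx (f := fun _ : Fin 1 => (a, b))
      ⟨fun _ => hab, fun i j hij => absurd hij (by omega)⟩
    rw [estimateSq, Fin.sum_univ_one, ← sq_abs] at h
    exact (pow_le_pow_iff_left₀ (abs_nonneg _) (jamesNorm_nonneg hx) two_ne_zero).mp h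
  · simpa [Icc_eq_empty hab] using jamesNorm_nonneg hx

lemma jamesNorm_sq_le_of_estimateSq_le (hx : MemJ x) {M : ℝ}
    (h : ∀ n f, Admissible n f → estimateSq x n f ≤ M) : jamesNorm x ^ 2 ≤ M := by
  have hM : 0 ≤ M := (estimateSq_nonneg x 0 Fin.elim0).trans (h 0 _ admissible_elim0)
  have : jamesNorm x ≤ √M :=
    csSup_le ⟨0, zero_mem_estimates x⟩
      fun _ ⟨n, f, hf, hr⟩ => hr ▸ Real.sqrt_le_sqrt (h n f hf)
  calc jamesNorm x ^ 2 ≤ √M ^ 2 := pow_le_pow_left₀ (jamesNorm_nonneg hx) this 2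
    _ = M := Real.sq_sqrt hM

lemma mem_ballJ_of_estimateSq_le_one (h : ∀ n f, Admissible n f → estimateSq x n f ≤ 1) :
    x ∈ ballJ := by
  have hr : ∀ r ∈ estimates x, r ≤ 1 := fun _ ⟨n, f, hf, hr⟩ =>
    hr ▸ Real.sqrt_le_one.mpr (h n f hf)
  exact ⟨⟨1, hr⟩, csSup_le ⟨0, zero_mem_estimates x⟩ hr⟩

lemma sum_range_sq_le_jamesNorm_sq (hx : MemJ x) (N : ℕ) :
    ∑ k ∈ range N, x k ^ 2 ≤ jamesNorm x ^ 2 := by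
  have h := estimateSq_le_jamesNorm_sq hx (f := fun i : Fin N => ((i : ℕ), (i : ℕ)))
    ⟨fun _ => le_rfl, fun _ _ hij => hij⟩
  simpa [estimateSq, Fin.sum_univ_eq_sum_range (fun k => x k ^ 2)] using h

lemma summable_sq (hx : MemJ x) : Summable fun k => x k ^ 2 :=
  summable_of_sum_range_le (fun _ => sq_nonneg _) (sum_range_sq_le_jamesNorm_sq hx)

lemma tsum_sq_le_jamesNorm_sq (hx : MemJ x) : ∑' k, x k ^ 2 ≤ jamesNorm x ^ 2 :=
  (summable_sq hx).tsum_le_of_sum_range_le (sum_range_sq_le_jamesNorm_sq hx)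

end JamesNorm

lemma eq_zero_of_forall_add_smul_mem {E : Type*} [AddCommGroup E] [Module ℝ E] {A : Set E}
    {x e : E} {t : ℝ} (hx : x ∈ A.extremePoints ℝ) (ht : 0 < t)
    (h : ∀ τ, |τ| ≤ t → x + τ • e ∈ A) : e = 0 := by
  have hseg : x ∈ openSegment ℝ (x + t • e) (x + (-t) • e) :=
    ⟨1 / 2, 1 / 2, by norm_num, by norm_num, by norm_num, by module⟩
  have := (mem_extremePoints_iff_left.mp hx).2 _ (h t (abs_of_pos ht).le) _
    (h (-t) (by rw [abs_neg, abs_of_pos ht])) hseg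
  simpa [ht.ne'] using this

lemma sq_add_le_sq_add_three_mul {a s t : ℝ} (ha : |a| ≤ 1) (hs : |s| ≤ t) (ht : t ≤ 1) :
    (a + s) ^ 2 ≤ a ^ 2 + 3 * t := by
  have has : a * s ≤ t := (le_abs_self _).trans <| by
    rw [abs_mul]; nlinarith [abs_nonneg a, abs_nonneg s]
  have hss : s ^ 2 ≤ t := by
    rw [← sq_abs]; nlinarith [abs_nonneg s]
  nlinarith

section Perturbation

variable {x e : ℕ → ℝ} {n : ℕ} {f : Fin n → ℕ × ℕ}

lemma estimateSq_add_smul_le (T : Finset (Fin n)) {t τ : ℝ}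
    (hx : ∀ i, |∑ k ∈ Icc (f i).1 (f i).2, x k| ≤ 1)
    (he : ∀ i, |∑ k ∈ Icc (f i).1 (f i).2, e k| ≤ 1)
    (hT : ∀ i ∉ T, ∑ k ∈ Icc (f i).1 (f i).2, e k = 0) (hτ : |τ| ≤ t) (ht : t ≤ 1) :
    estimateSq (x + τ • e) n f ≤ estimateSq x n f + 3 * t * #T := by
  have hterm : ∀ i, (∑ k ∈ Icc (f i).1 (f i).2, (x + τ • e) k) ^ 2 ≤
      (∑ k ∈ Icc (f i).1 (f i).2, x k) ^ 2 + if i ∈ T then 3 * t else 0 := by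
    intro i
    simp only [Pi.add_apply, Pi.smul_apply, smul_eq_mul, sum_add_distrib, ← mul_sum]
    set a := ∑ k ∈ Icc (f i).1 (f i).2, x k
    set b := ∑ k ∈ Icc (f i).1 (f i).2, e k
    split_ifs with hi
    · have hτb : |τ * b| ≤ t := by
        rw [abs_mul]
        simpa using mul_le_mul hτ (he i) (abs_nonneg _) ((abs_nonneg _).trans hτ)
      exact sq_add_le_sq_add_three_mul (hx i) hτb ht
    · have hb : b = 0 := hT i hi
      simp [hb]
  calc estimateSq (x + τ • e) n f
      ≤ ∑ i, ((∑ k ∈ Icc (f i).1 (f i).2, x k) ^ 2 + if i ∈ T then 3 * t else 0) :=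
        sum_le_sum fun i _ => hterm i
    _ = estimateSq x n f + 3 * t * #T := by
        rw [sum_add_distrib, sum_ite_mem, univ_inter, sum_const, nsmul_eq_mul, mul_comm]; rfl

end Perturbation

lemma sum_Icc_single_one (c a b : ℕ) :
    ∑ k ∈ Icc a b, Pi.single c (1 : ℝ) k = if a ≤ c ∧ c ≤ b then 1 else 0 := by
  simp [sum_pi_single']

lemma sum_Icc_single_sub_single (c a b : ℕ) :
    ∑ k ∈ Icc a b, (Pi.single c 1 - Pi.single (c + 1) 1 : ℕ → ℝ) k =
      (if a ≤ c ∧ c ≤ b then 1 else 0) - if a ≤ c + 1 ∧ c + 1 ≤ b then 1 else 0 := by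
  simp [sum_sub_distrib, sum_pi_single']

lemma add_smul_single_mem_ballJ {x : ℕ → ℝ} (hx : x ∈ ballJ) {t τ : ℝ}
    (ht : jamesNorm x ^ 2 + 3 * t ≤ 1) (hτ : |τ| ≤ t) : x + τ • Pi.single 0 (1 : ℝ) ∈ ballJ :=
  mem_ballJ_of_estimateSq_le_one fun n f hf => calc
    estimateSq (x + τ • Pi.single 0 1) n f ≤ estimateSq x n f + 3 * t * #{i | (f i).1 = 0} :=
      estimateSq_add_smul_le _ (fun i => (abs_sum_Icc_le_jamesNorm hx.1 _ _).trans hx.2)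
        (fun i => by rw [sum_Icc_single_one]; split_ifs <;> norm_num)
        (fun i hi => by simp_all) hτ (by nlinarith [jamesNorm_nonneg hx.1])
    _ ≤ jamesNorm x ^ 2 + 3 * t * 1 := by
      gcongr
      · exact estimateSq_le_jamesNorm_sq hx.1 hf
      · linarith [(abs_nonneg τ).trans hτ]
      · exact_mod_cast hf.card_filter_fst_eq_le_one 0
    _ ≤ 1 := by linarith

lemma jamesNorm_eq_one_of_mem_extremePoints {x : ℕ → ℝ} (hext : x ∈ ballJ.extremePoints ℝ) :
    jamesNorm x = 1 := by
  by_contra hne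
  have ht : 0 < (1 - jamesNorm x ^ 2) / 3 := by
    nlinarith [jamesNorm_nonneg hext.1.1, lt_of_le_of_ne hext.1.2 hne]
  have := eq_zero_of_forall_add_smul_mem hext ht fun τ hτ =>
    add_smul_single_mem_ballJ hext.1 (by linarith) hτ
  simpa using congrFun this 0

section Chains

variable {x : ℕ → ℝ}

/-- The sum of the squared sums of `x` over the blocks `[g i, g (i + 1))`, `i < m`. -/
def chainValue (x : ℕ → ℝ) (m : ℕ) (g : ℕ → ℕ) : ℝ :=
  ∑ i ∈ range m, (partialSum x (g (i + 1)) - partialSum x (g i)) ^ 2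

@[simp] lemma chainValue_zero (x : ℕ → ℝ) (g : ℕ → ℕ) : chainValue x 0 g = 0 := by
  simp [chainValue]

lemma chainValue_succ (x : ℕ → ℝ) (m : ℕ) (g : ℕ → ℕ) :
    chainValue x (m + 1) g =
      chainValue x m g + (partialSum x (g (m + 1)) - partialSum x (g m)) ^ 2 :=
  sum_range_succ _ _

lemma chainValue_succ' (x : ℕ → ℝ) (m : ℕ) (g : ℕ → ℕ) :
    chainValue x (m + 1) g =
      (partialSum x (g 1) - partialSum x (g 0)) ^ 2 + chainValue x m (g ∘ Nat.succ) := by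
  rw [chainValue, sum_range_succ', add_comm]; rfl

def chainAppend (m : ℕ) (g h : ℕ → ℕ) : ℕ → ℕ :=
  fun i => if i ≤ m then g i else h (i - (m + 1))

lemma chainAppend_of_le {m i : ℕ} (g h : ℕ → ℕ) (hi : i ≤ m) : chainAppend m g h i = g i :=
  if_pos hi

lemma chainAppend_add (m k : ℕ) (g h : ℕ → ℕ) : chainAppend m g h (m + 1 + k) = h k := by
  simp [chainAppend, show ¬ m + 1 + k ≤ m by omega]

lemma chainAppend_monotone {m : ℕ} {g h : ℕ → ℕ} (hg : Monotone g) (hh : Monotone h)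
    (hgh : g m ≤ h 0) : Monotone (chainAppend m g h) := by
  refine monotone_nat_of_le_succ fun i => ?_
  rcases lt_trichotomy i m with hi | rfl | hi
  · simpa [chainAppend, hi.le, Nat.succ_le_of_lt hi] using hg i.le_succ
  · simpa [chainAppend] using hgh
  · simpa [chainAppend, hi.not_ge, (hi.trans i.lt_succ_self).not_ge, Nat.sub_add_comm hi]
      using hh (i - (m + 1)).le_succ

lemma chainValue_chainAppend (x : ℕ → ℝ) (m k : ℕ) (g h : ℕ → ℕ) :
    chainValue x (m + 1 + k) (chainAppend m g h) =
      chainValue x m g + (partialSum x (h 0) - partialSum x (g m)) ^ 2 + chainValue x k h := by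
  induction k with
  | zero =>
    have hprefix : chainValue x m (chainAppend m g h) = chainValue x m g :=
      sum_congr rfl fun i hi => by
        rw [chainAppend_of_le _ _ (mem_range.mp hi), chainAppend_of_le _ _ (mem_range.mp hi).le]
    rw [chainValue_succ, hprefix, chainAppend_of_le _ _ le_rfl, ← chainAppend_add m 0 g h]
    simp
  | succ k ih =>
    rw [← add_assoc, chainValue_succ, ih, chainValue_succ, add_assoc (m + 1) k 1,
      chainAppend_add, chainAppend_add]
    ring

lemma estimateSq_snoc (x : ℕ → ℝ) {n : ℕ} (f : Fin n → ℕ × ℕ) (p : ℕ × ℕ) :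
    estimateSq x (n + 1) (Fin.snoc f p) = estimateSq x n f + (∑ k ∈ Icc p.1 p.2, x k) ^ 2 := by
  simp [estimateSq, Fin.sum_univ_castSucc]

lemma estimateSq_succ (x : ℕ → ℝ) {n : ℕ} (f : Fin (n + 1) → ℕ × ℕ) :
    estimateSq x (n + 1) f =
      estimateSq x n (f ∘ Fin.castSucc) +
        (∑ k ∈ Icc (f (Fin.last n)).1 (f (Fin.last n)).2, x k) ^ 2 := by
  simp [estimateSq, Fin.sum_univ_castSucc]

lemma exists_admissible_estimateSq_eq_chainValue (x : ℕ → ℝ) (m : ℕ) {g : ℕ → ℕ}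
    (hg : Monotone g) :
    ∃ n f, Admissible n f ∧ (∀ i, (f i).2 < g m) ∧ estimateSq x n f = chainValue x m g := by
  induction m with
  | zero => exact ⟨0, Fin.elim0, admissible_elim0, fun i => i.elim0, by simp [estimateSq]⟩
  | succ m ih =>
    obtain ⟨n, f, hf, hlt, hval⟩ := ih
    rcases (hg (Nat.le_add_right m 1)).lt_or_eq with hstep | hstep
    · refine ⟨n + 1, Fin.snoc f (g m, g (m + 1) - 1), hf.snoc (by simp; omega) hlt,
        Fin.lastCases (by simp; omega) fun i => by simpa using (hlt i).trans hstep, ?_⟩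
      rw [estimateSq_snoc, hval, chainValue_succ,
        sum_Icc_eq_partialSum_sub _ (by simp; omega), Nat.sub_add_cancel (by omega)]
    · exact ⟨n, f, hf, fun i => hstep ▸ hlt i, by simp [chainValue_succ, hval, hstep]⟩

lemma chainValue_le_jamesNorm_sq (hx : MemJ x) (m : ℕ) {g : ℕ → ℕ} (hg : Monotone g) :
    chainValue x m g ≤ jamesNorm x ^ 2 := by
  obtain ⟨n, f, hf, -, hval⟩ := exists_admissible_estimateSq_eq_chainValue x m hg
  exact hval ▸ estimateSq_le_jamesNorm_sq hx hf

lemma chainValue_pair (x : ℕ → ℝ) (a b : ℕ) :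
    chainValue x 1 (chainAppend 0 (fun _ => a) fun _ => b) =
      (partialSum x b - partialSum x a) ^ 2 := by
  simpa using chainValue_chainAppend x 0 0 (fun _ => a) fun _ => b

lemma Admissible.exists_chain (x : ℕ → ℝ) {n : ℕ} {f : Fin (n + 1) → ℕ × ℕ}
    (hf : Admissible (n + 1) f) :
    ∃ m g, Monotone g ∧ g 0 = (f 0).1 ∧ g m = (f (Fin.last n)).2 + 1 ∧
      estimateSq x (n + 1) f ≤ chainValue x m g := by
  induction n with
  | zero =>
    have h0 : (f 0).1 ≤ (f 0).2 := hf.1 0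
    refine ⟨1, chainAppend 0 (fun _ => (f 0).1) fun _ => (f 0).2 + 1,
      chainAppend_monotone monotone_const monotone_const (by omega), rfl,
      chainAppend_add 0 0 _ _, ?_⟩
    rw [chainValue_pair, estimateSq, Fin.sum_univ_one, sum_Icc_eq_partialSum_sub _ (by omega)]
  | succ n ih =>
    obtain ⟨m, g, hg, hg0, hgm, hval⟩ := ih (hf.comp_orderEmbedding Fin.castSuccOrderEmb)
    have hval : estimateSq x (n + 1) (f ∘ Fin.castSucc) ≤ chainValue x m g := hval
    have hab := hf.1 (Fin.last (n + 1))
    have hgap : g m ≤ (f (Fin.last (n + 1))).1 := by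
      have : g m = (f (Fin.last n).castSucc).2 + 1 := hgm
      have := hf.2 _ _ (Fin.castSucc_lt_last (Fin.last n))
      omega
    refine ⟨m + 1 + 1, chainAppend m g (chainAppend 0 (fun _ => (f (Fin.last (n + 1))).1)
        fun _ => (f (Fin.last (n + 1))).2 + 1),
      chainAppend_monotone hg (chainAppend_monotone monotone_const monotone_const (by omega))
        hgap, ?_, chainAppend_add m 1 _ _, ?_⟩
    · simpa [chainAppend_of_le] using hg0
    · rw [chainValue_chainAppend, chainValue_pair, estimateSq_succ,
        sum_Icc_eq_partialSum_sub _ (by omega)]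
      have := sq_nonneg (partialSum x (f (Fin.last (n + 1))).1 - partialSum x (g m))
      simp only [chainAppend, le_refl, if_true]
      linarith

lemma Admissible.exists_chain_of_finset (x : ℕ → ℝ) {n : ℕ} {f : Fin n → ℕ × ℕ}
    (hf : Admissible n f) {s : Finset (Fin n)} (hs : s.Nonempty) :
    ∃ m g, Monotone g ∧ (∃ i ∈ s, g 0 = (f i).1) ∧ (∃ i ∈ s, g m = (f i).2 + 1) ∧
      ∑ i ∈ s, (∑ k ∈ Icc (f i).1 (f i).2, x k) ^ 2 ≤ chainValue x m g := by
  obtain ⟨k, hk⟩ : ∃ k, #s = k + 1 := ⟨#s - 1, by have := hs.card_pos; omega⟩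
  obtain ⟨m, g, hg, hg0, hgm, hval⟩ := (hf.comp_orderEmbedding (s.orderEmbOfFin hk)).exists_chain x
  refine ⟨m, g, hg, ⟨_, s.orderEmbOfFin_mem hk 0, hg0⟩, ⟨_, s.orderEmbOfFin_mem hk _, hgm⟩, ?_⟩
  rwa [← map_orderEmbOfFin_univ s hk, sum_map]

def leftSup (x : ℕ → ℝ) (c : ℕ) : ℝ :=
  sSup {v | ∃ m g, Monotone g ∧ g m ≤ c ∧ v = chainValue x m g}

def rightSup (x : ℕ → ℝ) (c : ℕ) : ℝ :=
  sSup {v | ∃ m g, Monotone g ∧ c ≤ g 0 ∧ v = chainValue x m g}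

lemma chainValue_le_leftSup (hx : MemJ x) {m c : ℕ} {g : ℕ → ℕ} (hg : Monotone g)
    (hgc : g m ≤ c) : chainValue x m g ≤ leftSup x c :=
  le_csSup ⟨jamesNorm x ^ 2, fun _ ⟨m, _, hg, _, hv⟩ => hv ▸ chainValue_le_jamesNorm_sq hx m hg⟩
    ⟨m, g, hg, hgc, rfl⟩

lemma chainValue_le_rightSup (hx : MemJ x) {m c : ℕ} {g : ℕ → ℕ} (hg : Monotone g)
    (hgc : c ≤ g 0) : chainValue x m g ≤ rightSup x c :=
  le_csSup ⟨jamesNorm x ^ 2, fun _ ⟨m, _, hg, _, hv⟩ => hv ▸ chainValue_le_jamesNorm_sq hx m hg⟩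
    ⟨m, g, hg, hgc, rfl⟩

lemma leftSup_nonneg (hx : MemJ x) (c : ℕ) : 0 ≤ leftSup x c := by
  simpa using chainValue_le_leftSup hx (m := 0) (g := fun _ => c) monotone_const le_rfl

lemma rightSup_nonneg (hx : MemJ x) (c : ℕ) : 0 ≤ rightSup x c := by
  simpa using chainValue_le_rightSup hx (m := 0) (g := fun _ => c) monotone_const le_rfl

lemma leftSup_le {c : ℕ} {M : ℝ}
    (h : ∀ m g, Monotone g → g m ≤ c → chainValue x m g ≤ M) : leftSup x c ≤ M :=
  csSup_le ⟨0, 0, fun _ => c, monotone_const, le_rfl, by simp⟩ fun _ ⟨m, g, hg, hgc, hv⟩ =>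
    hv ▸ h m g hg hgc

lemma rightSup_le {c : ℕ} {M : ℝ}
    (h : ∀ m g, Monotone g → c ≤ g 0 → chainValue x m g ≤ M) : rightSup x c ≤ M :=
  csSup_le ⟨0, 0, fun _ => c, monotone_const, le_rfl, by simp⟩ fun _ ⟨m, g, hg, hgc, hv⟩ =>
    hv ▸ h m g hg hgc

lemma leftSup_zero_le (x : ℕ → ℝ) : leftSup x 0 ≤ 0 :=
  leftSup_le fun m g hg hgm => by
    have hg0 : ∀ i ≤ m, g i = 0 := fun i hi => Nat.le_zero.mp ((hg hi).trans hgm)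
    refine (sum_eq_zero fun i hi => ?_).le
    rw [hg0 i (mem_range.mp hi).le, hg0 (i + 1) (mem_range.mp hi)]
    simp

lemma sum_le_leftSup (hx : MemJ x) {n c : ℕ} {f : Fin n → ℕ × ℕ} (hf : Admissible n f)
    {s : Finset (Fin n)} (hs : ∀ i ∈ s, (f i).2 < c) :
    ∑ i ∈ s, (∑ k ∈ Icc (f i).1 (f i).2, x k) ^ 2 ≤ leftSup x c := by
  rcases s.eq_empty_or_nonempty with rfl | hne
  · simpa using leftSup_nonneg hx c
  obtain ⟨m, g, hg, -, ⟨i, hi, hgm⟩, hval⟩ := hf.exists_chain_of_finset x hne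
  exact hval.trans (chainValue_le_leftSup hx hg (by have := hs i hi; omega))

lemma sum_le_rightSup (hx : MemJ x) {n c : ℕ} {f : Fin n → ℕ × ℕ} (hf : Admissible n f)
    {s : Finset (Fin n)} (hs : ∀ i ∈ s, c ≤ (f i).1) :
    ∑ i ∈ s, (∑ k ∈ Icc (f i).1 (f i).2, x k) ^ 2 ≤ rightSup x c := by
  rcases s.eq_empty_or_nonempty with rfl | hne
  · simpa using rightSup_nonneg hx c
  obtain ⟨m, g, hg, ⟨i, hi, hg0⟩, -, hval⟩ := hf.exists_chain_of_finset x hne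
  exact hval.trans (chainValue_le_rightSup hx hg (hg0 ▸ hs i hi))

lemma estimateSq_le_leftSup_add_rightSup (hx : MemJ x) {n c : ℕ} {f : Fin n → ℕ × ℕ}
    (hf : Admissible n f) (hc : ∀ i, (f i).2 < c ∨ c ≤ (f i).1) :
    estimateSq x n f ≤ leftSup x c + rightSup x c := by
  rw [estimateSq, ← sum_filter_add_sum_filter_not univ fun i => (f i).2 < c]
  exact add_le_add (sum_le_leftSup hx hf fun i hi => (mem_filter.mp hi).2)
    (sum_le_rightSup hx hf fun i hi => (hc i).resolve_left (mem_filter.mp hi).2)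

lemma jamesNorm_sq_le_rightSup_zero (hx : MemJ x) : jamesNorm x ^ 2 ≤ rightSup x 0 :=
  jamesNorm_sq_le_of_estimateSq_le hx fun _ _ hf =>
    sum_le_rightSup hx hf fun _ _ => Nat.zero_le _

lemma chainValue_add_sq_add_chainValue_le (hx : MemJ x) {m k : ℕ} {g h : ℕ → ℕ}
    (hg : Monotone g) (hh : Monotone h) (hgh : g m ≤ h 0) :
    chainValue x m g + (partialSum x (h 0) - partialSum x (g m)) ^ 2 + chainValue x k h ≤
      jamesNorm x ^ 2 :=
  chainValue_chainAppend x m k g h ▸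
    chainValue_le_jamesNorm_sq hx _ (chainAppend_monotone hg hh hgh)

lemma leftSup_add_rightSup_le (hx : MemJ x) (c : ℕ) :
    leftSup x c + rightSup x c ≤ jamesNorm x ^ 2 := by
  suffices h : leftSup x c ≤ jamesNorm x ^ 2 - rightSup x c by linarith
  refine leftSup_le fun m g hg hgc => ?_
  suffices rightSup x c ≤ jamesNorm x ^ 2 - chainValue x m g by linarith
  refine rightSup_le fun k h hh hch => ?_
  nlinarith [chainValue_add_sq_add_chainValue_le hx (k := k) hg hh (hgc.trans hch),
    sq_nonneg (partialSum x (h 0) - partialSum x (g m))]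

end Chains

lemma add_smul_single_sub_single_mem_ballJ {x : ℕ → ℝ} (hx : x ∈ ballJ) {c : ℕ} {t τ : ℝ}
    (ht : leftSup x (c + 1) + rightSup x (c + 1) + 6 * t ≤ 1) (hτ : |τ| ≤ t) :
    x + τ • (Pi.single c 1 - Pi.single (c + 1) 1 : ℕ → ℝ) ∈ ballJ :=
  mem_ballJ_of_estimateSq_le_one fun n f hf => by
    have hL := leftSup_nonneg hx.1 (c + 1)
    have hR := rightSup_nonneg hx.1 (c + 1)
    have hpert := estimateSq_add_smul_le (f := f)
      (e := (Pi.single c 1 - Pi.single (c + 1) 1 : ℕ → ℝ)) {i | (f i).2 = c ∨ (f i).1 = c + 1}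
      (fun i => (abs_sum_Icc_le_jamesNorm hx.1 _ _).trans hx.2)
      (fun i => by rw [sum_Icc_single_sub_single]; split_ifs <;> norm_num)
      (fun i hi => by
        have := hf.1 i
        simp only [mem_filter, mem_univ, true_and] at hi
        rw [sum_Icc_single_sub_single]; split_ifs <;> (try norm_num) <;> omega)
      hτ (by linarith)
    -- only intervals ending at `c` or starting at `c + 1` see the perturbation; if there is one,
    -- no interval contains both `c` and `c + 1`, so the estimate splits at `c + 1`
    rcases Finset.eq_empty_or_nonempty {i | (f i).2 = c ∨ (f i).1 = c + 1} with hT | ⟨i, hi⟩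
    · rw [hT, card_empty, Nat.cast_zero, mul_zero, add_zero] at hpert
      nlinarith [estimateSq_le_jamesNorm_sq hx.1 hf, jamesNorm_nonneg hx.1, hx.2]
    · have hsplit := estimateSq_le_leftSup_add_rightSup hx.1 hf
        (hf.snd_lt_or_le_fst (by simpa using hi))
      have hcard : (#{i | (f i).2 = c ∨ (f i).1 = c + 1} : ℝ) ≤ 2 := by
        rw [filter_or]
        exact_mod_cast (card_union_le _ _).trans
          (add_le_add (hf.card_filter_snd_eq_le_one c) (hf.card_filter_fst_eq_le_one (c + 1)))
      nlinarith [(abs_nonneg τ).trans hτ]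

lemma jamesNorm_sq_le_leftSup_add_rightSup {x : ℕ → ℝ} (hext : x ∈ ballJ.extremePoints ℝ)
    (c : ℕ) : jamesNorm x ^ 2 ≤ leftSup x c + rightSup x c := by
  obtain ⟨hx, hle⟩ := hext.1
  cases c with
  | zero =>
    exact (jamesNorm_sq_le_rightSup_zero hx).trans (le_add_of_nonneg_left (leftSup_nonneg hx 0))
  | succ c =>
    by_contra! hlt
    have ht : 0 < (1 - (leftSup x (c + 1) + rightSup x (c + 1))) / 6 := by
      nlinarith [jamesNorm_nonneg hx]
    have := eq_zero_of_forall_add_smul_mem hext ht fun τ hτ =>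
      add_smul_single_sub_single_mem_ballJ (c := c) hext.1 (by linarith) hτ
    simpa using congrFun this c

section Splitting

variable {x : ℕ → ℝ}

lemma exists_chain_lt_of_lt_leftSup {c : ℕ} {θ : ℝ} (h : θ < leftSup x c) :
    ∃ m g, Monotone g ∧ g m ≤ c ∧ θ < chainValue x m g := by
  unfold leftSup at h
  obtain ⟨_, ⟨m, g, hg, hgc, rfl⟩, hv⟩ :=
    exists_lt_of_lt_csSup (by exact ⟨0, 0, fun _ => c, monotone_const, le_rfl, by simp⟩) h
  exact ⟨m, g, hg, hgc, hv⟩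

lemma exists_chain_lt_of_lt_rightSup {c : ℕ} {θ : ℝ} (h : θ < rightSup x c) :
    ∃ m g, Monotone g ∧ c ≤ g 0 ∧ θ < chainValue x m g := by
  unfold rightSup at h
  obtain ⟨_, ⟨m, g, hg, hgc, rfl⟩, hv⟩ :=
    exists_lt_of_lt_csSup (by exact ⟨0, 0, fun _ => c, monotone_const, le_rfl, by simp⟩) h
  exact ⟨m, g, hg, hgc, hv⟩

lemma chainValue_add_sq_le_leftSup (hx : MemJ x) {m c : ℕ} {g : ℕ → ℕ} (hg : Monotone g)
    (hgc : g m ≤ c) :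
    chainValue x m g + (partialSum x c - partialSum x (g m)) ^ 2 ≤ leftSup x c := by
  have := chainValue_le_leftSup hx (chainAppend_monotone hg monotone_const hgc)
    (chainAppend_add m 0 g fun _ => c).le
  rwa [chainValue_chainAppend, chainValue_zero, add_zero] at this

lemma sq_add_chainValue_le_rightSup (hx : MemJ x) {m c : ℕ} {g : ℕ → ℕ} (hg : Monotone g)
    (hcg : c ≤ g 0) :
    (partialSum x (g 0) - partialSum x c) ^ 2 + chainValue x m g ≤ rightSup x c := by
  have := chainValue_le_rightSup hx (m := 0 + 1 + m)
    (chainAppend_monotone (m := 0) (g := fun _ => c) monotone_const hg hcg) le_rfl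
  rwa [chainValue_chainAppend, chainValue_zero, zero_add] at this

lemma exists_chain_last_lt (hx : MemJ x) {n : ℕ} {θ : ℝ} (hθ : leftSup x n + x n ^ 2 < θ)
    (m : ℕ) {g : ℕ → ℕ} (hg : Monotone g) (hgm : g m ≤ n + 1) (hv : θ < chainValue x m g) :
    ∃ m g, Monotone g ∧ g m < n ∧
      θ < chainValue x m g + (partialSum x (n + 1) - partialSum x (g m)) ^ 2 := by
  have hL := leftSup_nonneg hx n
  induction m with
  | zero => nlinarith [chainValue_zero x g, sq_nonneg (x n)]
  | succ m ih =>
    have hend : g (m + 1) = n + 1 := by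
      by_contra hne
      have := chainValue_le_leftSup hx hg (show g (m + 1) ≤ n by omega)
      nlinarith [sq_nonneg (x n)]
    rw [chainValue_succ, hend] at hv
    rcases lt_trichotomy (g m) n with hlt | heq | hgt
    · exact ⟨m, g, hg, hlt, hv⟩
    · have := chainValue_le_leftSup hx hg heq.le
      rw [heq, partialSum_succ] at hv
      nlinarith
    · have heq : g m = n + 1 := by have := hg (Nat.le_add_right m 1); omega
      exact ih (by omega) (by simpa [heq] using hv)

lemma exists_chain_first_gt (hx : MemJ x) {n : ℕ} {θ : ℝ} (hθ : x n ^ 2 + rightSup x (n + 1) < θ)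
    (m : ℕ) {g : ℕ → ℕ} (hg : Monotone g) (hg0 : n ≤ g 0) (hv : θ < chainValue x m g) :
    ∃ m g, Monotone g ∧ n + 1 < g 0 ∧
      θ < (partialSum x (g 0) - partialSum x n) ^ 2 + chainValue x m g := by
  have hR := rightSup_nonneg hx (n + 1)
  induction m generalizing g with
  | zero => nlinarith [chainValue_zero x g, sq_nonneg (x n)]
  | succ m ih =>
    have hstart : g 0 = n := by
      by_contra hne
      have := chainValue_le_rightSup hx (m := m + 1) hg (show n + 1 ≤ g 0 by omega)
      nlinarith [sq_nonneg (x n)]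
    have hg' : Monotone (g ∘ Nat.succ) := hg.comp fun _ _ => Nat.succ_le_succ
    rw [chainValue_succ', hstart] at hv
    rcases lt_trichotomy (g 1) (n + 1) with hlt | heq | hgt
    · have heq : g 1 = n := by have := hg (Nat.zero_le 1); omega
      exact ih hg' (by simp [heq]) (by simpa [heq] using hv)
    · have := chainValue_le_rightSup hx (m := m) (c := n + 1) hg' (by simp [heq])
      rw [heq, partialSum_succ] at hv
      nlinarith
    · exact ⟨m, g ∘ Nat.succ, hg', hgt, hv⟩

lemma leftSup_succ_le (hx : MemJ x) {n : ℕ}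
    (hcut : jamesNorm x ^ 2 ≤ leftSup x n + rightSup x n) :
    leftSup x (n + 1) ≤ leftSup x n + x n ^ 2 := by
  by_contra! hlt
  set d := leftSup x (n + 1) - leftSup x n - x n ^ 2 with hd
  have hd0 : 0 < d := by linarith
  have hR := leftSup_add_rightSup_le hx (n + 1)
  obtain ⟨m₁, g₁, hg₁, hgm₁, hv₁⟩ := exists_chain_lt_of_lt_leftSup (x := x) (c := n + 1)
    (θ := leftSup x (n + 1) - d / 2) (by linarith)
  obtain ⟨m₁, g₁, hg₁, hp, hv₁⟩ := exists_chain_last_lt hx (by linarith) m₁ hg₁ hgm₁ hv₁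
  obtain ⟨m₂, g₂, hg₂, hgm₂, hv₂⟩ := exists_chain_lt_of_lt_rightSup (x := x) (c := n)
    (θ := rightSup x n - d / 2) (by linarith)
  obtain ⟨m₂, g₂, hg₂, hq, hv₂⟩ := exists_chain_first_gt hx (by linarith) m₂ hg₂ hgm₂ hv₂
  have hA := chainValue_add_sq_le_leftSup hx hg₁ hp.le
  have hB := sq_add_chainValue_le_rightSup hx (m := m₂) hg₂ hq.le
  have hC := chainValue_add_sq_add_chainValue_le hx (m := m₁) (k := m₂) hg₁ hg₂ (by omega)
  rw [partialSum_succ] at hv₁ hB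
  -- Let `u`, `w` be the sums of `x` over `[g₁ m₁, n)` and `(n, g₂ 0)`. Both near-optimal chains
  -- gain from absorbing `x n` into their outer block, so `u` and `w` have the sign of `x n`;
  -- yet the merged chain through `[g₁ m₁, g₂ 0)` forces `u * w < 0`.
  have huΔ : d / 2 < 2 * (partialSum x n - partialSum x (g₁ m₁)) * x n := by linarith
  have hΔw : d / 2 < 2 * x n * (partialSum x (g₂ 0) - partialSum x n - x n) := by linarith
  have huw : (partialSum x n - partialSum x (g₁ m₁)) *
      (partialSum x (g₂ 0) - partialSum x n - x n) < 0 := by linarith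
  nlinarith [mul_pos (by linarith : (0 : ℝ) < 2 * (partialSum x n - partialSum x (g₁ m₁)) * x n)
    (by linarith : (0 : ℝ) < 2 * x n * (partialSum x (g₂ 0) - partialSum x n - x n)),
    mul_nonpos_of_nonpos_of_nonneg huw.le (sq_nonneg (x n))]

end Splitting

lemma leftSup_le_sum_range_sq {x : ℕ → ℝ} (hx : MemJ x)
    (hcut : ∀ c, jamesNorm x ^ 2 ≤ leftSup x c + rightSup x c) (N : ℕ) :
    leftSup x N ≤ ∑ k ∈ range N, x k ^ 2 := by
  induction N with
  | zero => simpa using leftSup_zero_le x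
  | succ N ih =>
    rw [sum_range_succ]
    linarith [leftSup_succ_le hx (hcut N)]

lemma jamesNorm_sq_le_tsum_sq {x : ℕ → ℝ} (hx : MemJ x)
    (hcut : ∀ c, jamesNorm x ^ 2 ≤ leftSup x c + rightSup x c) :
    jamesNorm x ^ 2 ≤ ∑' k, x k ^ 2 :=
  jamesNorm_sq_le_of_estimateSq_le hx fun n f hf => by
    obtain ⟨B, hB⟩ := (Set.finite_range fun i => (f i).2).bddAbove
    calc estimateSq x n f ≤ leftSup x (B + 1) :=
          sum_le_leftSup hx hf fun i _ => Nat.lt_succ_of_le (hB ⟨i, rfl⟩)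
      _ ≤ ∑ k ∈ range (B + 1), x k ^ 2 := leftSup_le_sum_range_sq hx hcut _
      _ ≤ ∑' k, x k ^ 2 := (summable_sq hx).sum_le_tsum _ fun _ _ => sq_nonneg _

def l2ClosedBall : Set (ℕ → ℝ) := {u | Summable (fun k => u k ^ 2) ∧ ∑' k, u k ^ 2 ≤ 1}

lemma ballJ_subset_l2ClosedBall : ballJ ⊆ l2ClosedBall := fun _ ⟨hu, hle⟩ =>
  ⟨summable_sq hu, (tsum_sq_le_jamesNorm_sq hu).trans (by nlinarith [jamesNorm_nonneg hu])⟩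

lemma mem_extremePoints_l2ClosedBall {x : ℕ → ℝ} (hs : Summable fun k => x k ^ 2)
    (h : ∑' k, x k ^ 2 = 1) : x ∈ l2ClosedBall.extremePoints ℝ := by
  refine mem_extremePoints_iff_left.mpr ⟨⟨hs, h.le⟩, ?_⟩
  rintro y ⟨hys, hy⟩ z ⟨hzs, hz⟩ ⟨a, b, ha, hb, hab, rfl⟩
  have hds : Summable fun k => (y k - z k) ^ 2 :=
    ((hys.mul_left 2).add (hzs.mul_left 2)).of_nonneg_of_le (fun _ => sq_nonneg _)
      fun k => by nlinarith [sq_nonneg (y k + z k)]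
  have hsum : a * ∑' k, y k ^ 2 + b * ∑' k, z k ^ 2 =
      ∑' k, (a • y + b • z) k ^ 2 + a * b * ∑' k, (y k - z k) ^ 2 := by
    rw [← tsum_mul_left, ← tsum_mul_left, ← tsum_mul_left,
      ← (hys.mul_left a).tsum_add (hzs.mul_left b), ← hs.tsum_add (hds.mul_left _)]
    refine tsum_congr fun k => ?_
    simp only [Pi.add_apply, Pi.smul_apply, smul_eq_mul]
    linear_combination (-(a * y k ^ 2 + b * z k ^ 2)) * hab
  have hd0 : ∑' k, (y k - z k) ^ 2 = 0 := le_antisymm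
    (nonpos_of_mul_nonpos_right (by nlinarith) (mul_pos ha hb))
    (tsum_nonneg fun _ => sq_nonneg _)
  have hyz : ∀ k, y k = z k := fun k => by
    have := congrFun ((hasSum_zero_iff_of_nonneg fun _ => sq_nonneg _).mp (hd0 ▸ hds.hasSum)) k
    simpa [sub_eq_zero] using this
  funext k
  simp only [Pi.add_apply, Pi.smul_apply, smul_eq_mul, hyz k]
  rw [← add_mul, hab, one_mul]

end

theorem stmt3 (x : ℕ → ℝ) (hx : MemJ x) :
    x ∈ Set.extremePoints ℝ ballJ ↔ jamesNorm x = 1 ∧ l2Norm x = 1 := by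
  constructor
  · intro hext
    have hJ := jamesNorm_eq_one_of_mem_extremePoints hext
    have h2 : ∑' k, x k ^ 2 = 1 := by
      rw [le_antisymm (tsum_sq_le_jamesNorm_sq hx)
        (jamesNorm_sq_le_tsum_sq hx (jamesNorm_sq_le_leftSup_add_rightSup hext)), hJ, one_pow]
    exact ⟨hJ, by rw [l2Norm, h2, Real.sqrt_one]⟩
  · rintro ⟨hJ, h2⟩
    exact inter_extremePoints_subset_extremePoints_of_subset ballJ_subset_l2ClosedBall
      ⟨⟨hx, hJ.le⟩, mem_extremePoints_l2ClosedBall (summable_sq hx) (Real.sqrt_eq_one.mp h2)⟩
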